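/- There exist 3^d dyadic lattices D^1, …, D^{3^d} in ℝ^d such that for every cube Q there is some index j(Q) ∈ {1,…,3^d} and a cube P ∈ D^{j(Q)} with Q ⊆ P and |P| ≤ 3^d |Q|. -/

import Mathlib

open MeasureTheory ENNReal NNReal Set

noncomputable section

/-- A half-open axis-parallel cube in `ℝ^d`, given by its corner and (positive) sidelength. -/
structure Cube (d : ℕ) where
  corner : Fin d → ℝ
  side : ℝ
  side_pos : 0 < side

namespace Cube

variable {d : ℕ}

/-- The set of points of the cube: `[x_1, x_1+l) × ⋯ × [x_d, x_d+l)`. -/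
def toSet (Q : Cube d) : Set (Fin d → ℝ) :=
  {y | ∀ i, Q.corner i ≤ y i ∧ y i < Q.corner i + Q.side}

/-- The translate `Q + l(Q) m` of a cube. -/
def translate (Q : Cube d) (m : Fin d → ℤ) : Cube d :=
  ⟨fun i => Q.corner i + Q.side * (m i : ℝ), Q.side, Q.side_pos⟩

/-- The corner child `x(Q) + (1/2)(Q - x(Q))` of a cube. -/
def cornerChild (Q : Cube d) : Cube d :=
  ⟨Q.corner, Q.side / 2, by have := Q.side_pos; linarith⟩

/-- The threefold expansion `x(Q) + 3(Q - x(Q))` of a cube from its corner. -/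
def expand3 (Q : Cube d) : Cube d :=
  ⟨Q.corner, 3 * Q.side, by have := Q.side_pos; linarith⟩

/-- The dilate `D_c Q`: cube with the same center as `Q` and sidelength `c·l(Q)`. -/
def dilate (Q : Cube d) (c : ℝ) (hc : 0 < c) : Cube d :=
  ⟨fun i => Q.corner i + Q.side / 2 - c * Q.side / 2, c * Q.side, by
    have := Q.side_pos; positivity⟩

end Cube

/-- A dyadic lattice in `ℝ^d`: a family of generations of cubes, each generation formed by
all translates of one of its cubes, and each generation containing a cube whose corner child
belongs to the next generation. -/
structure DyadicLattice (d : ℕ) where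
  gen : ℤ → Set (Cube d)
  gen_translates : ∀ k, ∃ Q ∈ gen k, gen k = {R | ∃ m : Fin d → ℤ, R = Q.translate m}
  cornerChild_mem : ∀ k, ∃ Q ∈ gen k, Q.cornerChild ∈ gen (k + 1)

/-- The collection of all cubes of a dyadic lattice. -/
def DyadicLattice.cubes {d : ℕ} (D : DyadicLattice d) : Set (Cube d) := ⋃ k, D.gen k

/-- The quadrant of a dyadic lattice containing `x`: the union of all cubes of the lattice
containing `x`. -/
def DyadicLattice.quadrant {d : ℕ} (D : DyadicLattice d) (x : Fin d → ℝ) :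
    Set (Fin d → ℝ) :=
  ⋃ Q ∈ {Q : Cube d | Q ∈ D.cubes ∧ x ∈ Q.toSet}, Q.toSet

/-- A weight: a locally integrable, a.e. positive (and finite) function. -/
def IsWeight {d : ℕ} (w : (Fin d → ℝ) → ℝ) : Prop :=
  LocallyIntegrable w volume ∧ ∀ᵐ x ∂(volume : Measure (Fin d → ℝ)), 0 < w x

/-- The measure `w dx` associated to a weight. -/
def wMeasure {d : ℕ} (w : (Fin d → ℝ) → ℝ) : Measure (Fin d → ℝ) :=
  volume.withDensity fun x => ENNReal.ofReal (w x)

/-- `w(E) = ∫_E w dx`. -/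
def wInt {d : ℕ} (w : (Fin d → ℝ) → ℝ) (E : Set (Fin d → ℝ)) : ℝ≥0∞ :=
  ∫⁻ x in E, ENNReal.ofReal (w x)

/-- The `L^q` norm (with `q = ∞` allowed) of an `ℝ≥0∞`-valued function. -/
def eLpNormENN {X : Type*} [MeasurableSpace X] (g : X → ℝ≥0∞) (q : ℝ≥0∞)
    (μ : Measure X) : ℝ≥0∞ :=
  if q = ∞ then essSup g μ
  else (∫⁻ x, g x ^ q.toReal ∂μ) ^ (1 / q.toReal)

/-- The weak `L^q` quasinorm (with `q = ∞` allowed, interpreted as the `L^∞` norm) of an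
`ℝ≥0∞`-valued function: `sup_{t>0} t · μ{g > t}^{1/q}`. -/
def wnormENN {X : Type*} [MeasurableSpace X] (g : X → ℝ≥0∞) (q : ℝ≥0∞)
    (μ : Measure X) : ℝ≥0∞ :=
  if q = ∞ then essSup g μ
  else ⨆ t : ℝ≥0, (t : ℝ≥0∞) * μ {x | (t : ℝ≥0∞) < g x} ^ (1 / q.toReal)

/-- The weighted dyadic fractional maximal operator
`M^D_{α,w} f(x) = sup_{Q ∈ D, x ∈ Q} w(Q)^{α/d-1} ∫_Q |f| w`. -/
def MwDyadic {d : ℕ} (D : DyadicLattice d) (α : ℝ) (w f : (Fin d → ℝ) → ℝ)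
    (x : Fin d → ℝ) : ℝ≥0∞ :=
  ⨆ (Q : Cube d) (_ : Q ∈ D.cubes) (_ : x ∈ Q.toSet),
    wInt w Q.toSet ^ (α / (d : ℝ) - 1) *
      ∫⁻ y in Q.toSet, (‖f y‖₊ : ℝ≥0∞) * ENNReal.ofReal (w y)

/-- The dyadic fractional maximal operator `M^D_α f(x) = sup_{Q ∈ D, x ∈ Q} |Q|^{α/d} ⨍_Q |f|`. -/
def MfracDyadic {d : ℕ} (D : DyadicLattice d) (α : ℝ) (f : (Fin d → ℝ) → ℝ)
    (x : Fin d → ℝ) : ℝ≥0∞ :=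
  ⨆ (Q : Cube d) (_ : Q ∈ D.cubes) (_ : x ∈ Q.toSet),
    volume Q.toSet ^ (α / (d : ℝ) - 1) * ∫⁻ y in Q.toSet, (‖f y‖₊ : ℝ≥0∞)

/-- The fractional maximal operator `M_α f(x) = sup_{Q ∋ x} |Q|^{α/d} ⨍_Q |f|`,
supremum over all cubes containing `x`. -/
def Mfrac {d : ℕ} (α : ℝ) (f : (Fin d → ℝ) → ℝ) (x : Fin d → ℝ) : ℝ≥0∞ :=
  ⨆ (Q : Cube d) (_ : x ∈ Q.toSet),
    volume Q.toSet ^ (α / (d : ℝ) - 1) * ∫⁻ y in Q.toSet, (‖f y‖₊ : ℝ≥0∞)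

/-- The weighted fractional maximal operator
`M_{α,w} f(x) = sup_{Q ∋ x} w(Q)^{α/d-1} ∫_Q |f| w`, supremum over all cubes containing `x`. -/
def Mwfrac {d : ℕ} (α : ℝ) (w f : (Fin d → ℝ) → ℝ) (x : Fin d → ℝ) : ℝ≥0∞ :=
  ⨆ (Q : Cube d) (_ : x ∈ Q.toSet),
    wInt w Q.toSet ^ (α / (d : ℝ) - 1) *
      ∫⁻ y in Q.toSet, (‖f y‖₊ : ℝ≥0∞) * ENNReal.ofReal (w y)

/-- An `η`-sparse collection of cubes: each cube `Q` has a measurable subset `G(Q)` with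
`|G(Q)| ≥ η|Q|`, the sets `G(Q)` being pairwise disjoint. -/
def IsSparseCubes {d : ℕ} (η : ℝ) (S : Set (Cube d)) : Prop :=
  ∃ G : Cube d → Set (Fin d → ℝ),
    (∀ Q ∈ S, G Q ⊆ Q.toSet ∧ MeasurableSet (G Q) ∧
      ENNReal.ofReal η * volume Q.toSet ≤ volume (G Q)) ∧
    S.PairwiseDisjoint G

/-- The sparse operator `A_S^α f(x) = Σ_{Q ∈ S} χ_Q(x) |Q|^{α/d} ⨍_Q |f|`. -/
def sparseOp {d : ℕ} (α : ℝ) (S : Set (Cube d)) (f : (Fin d → ℝ) → ℝ)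
    (x : Fin d → ℝ) : ℝ≥0∞ :=
  ∑' Q : S, (Q : Cube d).toSet.indicator
    (fun _ => volume (Q : Cube d).toSet ^ (α / (d : ℝ) - 1) *
      ∫⁻ y in (Q : Cube d).toSet, (‖f y‖₊ : ℝ≥0∞)) x

/-- The `A_{p,q}^α` constant of a pair of weights:
`[v,w] = sup_Q |Q|^{α/d-1} (∫_Q v^{-p'/p})^{1/p'} (∫_Q w)^{1/q}` where `p' = p/(p-1)`. -/
def apqConst {d : ℕ} (p q α : ℝ) (v w : (Fin d → ℝ) → ℝ) : ℝ≥0∞ :=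
  ⨆ Q : Cube d,
    volume Q.toSet ^ (α / (d : ℝ) - 1) *
      (∫⁻ x in Q.toSet, ENNReal.ofReal (v x ^ (-(p / (p - 1)) / p))) ^ ((p - 1) / p) *
      (∫⁻ x in Q.toSet, ENNReal.ofReal (w x)) ^ (1 / q)

/-- The Muckenhoupt `A_∞` condition: `sup_Q exp(⨍_Q log w⁻¹) · ⨍_Q w < ∞`. -/
def IsAinfty {d : ℕ} (w : (Fin d → ℝ) → ℝ) : Prop :=
  ∃ C : ℝ, ∀ Q : Cube d,
    Real.exp (⨍ x in Q.toSet, Real.log (w x)⁻¹ ∂volume) *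
      (⨍ x in Q.toSet, w x ∂volume) ≤ C

/-- The Euclidean norm of a point of `ℝ^d`. -/
def euclNorm {d : ℕ} (x : Fin d → ℝ) : ℝ := Real.sqrt (∑ i, x i ^ 2)

/-- The auxiliary maximal operator `M_{T,λ}` controlling oscillations of truncations of `T`:
`M_{T,λ} f(x) = sup_{Q ∋ x} ess sup_{x',x'' ∈ Q} |T(fχ_{ℝ^d∖Q*})(x') − T(fχ_{ℝ^d∖Q*})(x'')|`. -/
def MT {d : ℕ} (T : ((Fin d → ℝ) → ℝ) → (Fin d → ℝ) → ℝ) (lam : ℝ) (hlam : 0 < lam)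
    (f : (Fin d → ℝ) → ℝ) (x : Fin d → ℝ) : ℝ≥0∞ :=
  ⨆ (Q : Cube d) (_ : x ∈ Q.toSet),
    essSup
      (fun z : (Fin d → ℝ) × (Fin d → ℝ) =>
        (‖T (((Q.dilate lam hlam).toSet)ᶜ.indicator f) z.1 -
            T (((Q.dilate lam hlam).toSet)ᶜ.indicator f) z.2‖₊ : ℝ≥0∞))
      ((volume.restrict Q.toSet).prod (volume.restrict Q.toSet))

end

/-!
For `v ∈ {0,1,2}^d` the `k`-th generation of the lattice `v` consists of the cubes of side
`2^{-k}` with corners in `2^{-k} (ℤ^d + (-1)^k v / 3)`; the alternating sign makes the corner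
child of such a cube a cube of the next generation, because `2 · (1/3) ≡ -1/3 mod 1`.

Given a cube `Q` of side `l`, take the scale `s = 2^{-k}` with `3l/2 ≤ s < 3l`. In each coordinate
the three grids `s (± t/3 + ℤ)`, `t = 0, 1, 2`, together make up `(s/3) ℤ`; if `p` is the largest
point of `(s/3) ℤ` below the left endpoint `a` of the side of `Q`, then
`a + l < p + s/3 + 2s/3 = p + s`, so the cell `[p, p + s)` of the grid through `p` covers
`[a, a + l)`. The product of these cells is a cube of one of the `3^d` lattices, of side `s < 3l`.
-/

namespace Cube

variable {d : ℕ}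

lemma toSet_eq_pi (Q : Cube d) :
    Q.toSet = univ.pi fun i => Ico (Q.corner i) (Q.corner i + Q.side) := by
  ext y
  simp [toSet]

lemma volume_toSet (Q : Cube d) : volume Q.toSet = ENNReal.ofReal Q.side ^ d := by
  simp [toSet_eq_pi, volume_pi_pi, Real.volume_Ico]

lemma volume_toSet_le_of_side_le {P Q : Cube d} {c : ℝ} (h : P.side ≤ c * Q.side) :
    volume P.toSet ≤ ENNReal.ofReal c ^ d * volume Q.toSet := by
  have hc : 0 ≤ c := nonneg_of_mul_nonneg_left (P.side_pos.le.trans h) Q.side_pos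
  rw [volume_toSet, volume_toSet, ← mul_pow, ← ENNReal.ofReal_mul hc]
  gcongr

lemma toSet_subset_toSet {P Q : Cube d}
    (h : ∀ i, P.corner i ≤ Q.corner i ∧ Q.corner i + Q.side ≤ P.corner i + P.side) :
    Q.toSet ⊆ P.toSet := fun _ hy i =>
  ⟨(h i).1.trans (hy i).1, (hy i).2.trans_le (h i).2⟩

lemma translate_zero (Q : Cube d) : Q.translate 0 = Q := by
  simp [translate]

end Cube

lemma Int.exists_fin_three_eq_units_mul_add (σ : ℤˣ) (n : ℤ) :
    ∃ (t : Fin 3) (z : ℤ), n = σ * t + 3 * z := by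
  rcases Int.units_eq_one_or σ with rfl | rfl
  · exact ⟨⟨(n % 3).toNat, by omega⟩, n / 3, by
    simp only [Units.val_one, Int.ofNat_toNat, one_mul]; omega⟩
  · exact ⟨⟨(-n % 3).toNat, by omega⟩, (n + (-n % 3)) / 3, by
    simp only [Units.val_neg, Units.val_one, Int.ofNat_toNat, neg_mul, one_mul]; omega⟩

lemma exists_third_shift_Ico_subset (σ : ℤˣ) {s l : ℝ} (hs : 0 < s) (hl : l ≤ 2 * s / 3)
    (a : ℝ) : ∃ (t : Fin 3) (z : ℤ),
      s * (σ * (t : ℕ) / 3) + s * z ≤ a ∧ a + l ≤ s * (σ * (t : ℕ) / 3) + s * z + s := by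
  obtain ⟨t, z, hn⟩ := Int.exists_fin_three_eq_units_mul_add σ ⌊3 * a / s⌋
  have hp : s * (σ * (t : ℕ) / 3) + s * z = s / 3 * ⌊3 * a / s⌋ := by
    rw [hn]; push_cast; ring
  have h₁ : s / 3 * ⌊3 * a / s⌋ ≤ a := by
    have := Int.floor_le (3 * a / s)
    rw [le_div_iff₀ hs] at this
    linarith
  have h₂ : a < s / 3 * ⌊3 * a / s⌋ + s / 3 := by
    have := Int.lt_floor_add_one (3 * a / s)
    rw [div_lt_iff₀ hs] at this
    linarith
  exact ⟨t, z, hp ▸ h₁, by rw [hp]; linarith⟩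

section ThirdShift

variable {d : ℕ}

noncomputable def thirdShiftCube (v : Fin d → Fin 3) (k : ℤ) : Cube d :=
  ⟨fun i => 2 ^ (-k) * (k.negOnePow * (v i : ℕ) / 3), 2 ^ (-k), by positivity⟩

def thirdShiftDyadicLattice (v : Fin d → Fin 3) : DyadicLattice d where
  gen k := {R | ∃ m : Fin d → ℤ, R = (thirdShiftCube v k).translate m}
  gen_translates k := ⟨thirdShiftCube v k, ⟨0, (Cube.translate_zero _).symm⟩, rfl⟩
  cornerChild_mem k := by
    refine ⟨thirdShiftCube v k, ⟨0, (Cube.translate_zero _).symm⟩,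
      fun i => k.negOnePow * (v i : ℕ), ?_⟩
    have h2 : (2 : ℝ) ^ (-(k + 1)) = 2 ^ (-k) / 2 := by
      rw [neg_add, zpow_add₀ two_ne_zero, zpow_neg_one, div_eq_mul_inv]
    simp only [Cube.cornerChild, Cube.translate, thirdShiftCube, Cube.mk.injEq, h2,
      Int.negOnePow_succ]
    refine ⟨funext fun i => ?_, trivial⟩
    push_cast
    ring

lemma exists_thirdShiftDyadicLattice_superset (Q : Cube d) :
    ∃ (v : Fin d → Fin 3), ∃ P ∈ (thirdShiftDyadicLattice v).cubes,
      Q.toSet ⊆ P.toSet ∧ P.side ≤ 3 * Q.side := by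
  obtain ⟨n, hn⟩ := exists_mem_Ioc_zpow (by linarith [Q.side_pos] : 0 < 3 * Q.side)
    one_lt_two
  have hs : (2 : ℝ) ^ (-(-n)) = 2 ^ n := by rw [neg_neg]
  have hl : Q.side ≤ 2 * 2 ^ n / 3 := by
    have := hn.2; rw [zpow_add_one₀ two_ne_zero] at this; linarith
  choose t z hz using fun i => exists_third_shift_Ico_subset (-n).negOnePow
    (by positivity : (0 : ℝ) < 2 ^ n) hl (Q.corner i)
  refine ⟨t, (thirdShiftCube t (-n)).translate z, mem_iUnion.2 ⟨-n, z, rfl⟩,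
    Cube.toSet_subset_toSet fun i => ?_, ?_⟩
  · simpa [Cube.translate, thirdShiftCube, hs] using hz i
  · simpa [Cube.translate, thirdShiftCube, hs] using hn.1.le

end ThirdShift

/-- every cube is well approximated by a cube from one of `3^d` dyadic lattices. -/
theorem three_lattice_covering (d : ℕ) :
    ∃ Ds : Fin (3 ^ d) → DyadicLattice d,
      ∀ Q : Cube d, ∃ (j : Fin (3 ^ d)) (P : Cube d), P ∈ (Ds j).cubes ∧
        Q.toSet ⊆ P.toSet ∧ volume P.toSet ≤ (3 : ℝ≥0∞) ^ d * volume Q.toSet := by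
  refine ⟨fun j => thirdShiftDyadicLattice (finFunctionFinEquiv.symm j), fun Q => ?_⟩
  obtain ⟨v, P, hP, hQP, hside⟩ := exists_thirdShiftDyadicLattice_superset Q
  refine ⟨finFunctionFinEquiv v, P, by simpa using hP, hQP, ?_⟩
  simpa using Cube.volume_toSet_le_of_side_le hside
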